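/- For every ω > ω_crit = (26 + 15√3)/2, there exists a unique z₂ > √(3/2) with σ(z₂) = ω and ω > (5 + √27)·z₂³ (equivalently k(z₂) > 0), where σ(z) = 4z⁵/(2z² − 3). -/

import Mathlib

/-!
On `z > √(3/2)` the function `σ z = 4 z⁵ / (2 z² - 3)` has derivative
`12 z⁴ (2 z² - 5) / (2 z² - 3)²`, so it decreases strictly from `+∞` up to `z = √(5/2)`.
Clearing the positive denominator, `(5 + √27) z³ < σ z` becomes `z < z_c := (1 + √3) / 2`,
and `z_c < √(5/2)`, `σ z_c = (26 + 15√3) / 2`. Hence for `ω > σ z_c` the intermediate value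
theorem gives a root of `σ z = ω` in `(√(3/2), z_c)`, unique there by strict monotonicity.
-/

open Set Filter Topology

namespace Equilibrium

noncomputable def sigma (z : ℝ) : ℝ := 4 * z ^ 5 / (2 * z ^ 2 - 3)

lemma sqrt_three_halves_lt_iff {z : ℝ} : √(3 / 2) < z ↔ 0 < z ∧ 0 < 2 * z ^ 2 - 3 := by
  constructor
  · intro h
    have hz : 0 < z := (Real.sqrt_nonneg _).trans_lt h
    exact ⟨hz, by linarith [(Real.sqrt_lt' hz).1 h]⟩
  · rintro ⟨hz, h⟩
    exact (Real.sqrt_lt' hz).2 (by linarith)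

lemma hasDerivAt_sigma {z : ℝ} (hz : 2 * z ^ 2 - 3 ≠ 0) :
    HasDerivAt sigma (12 * z ^ 4 * (2 * z ^ 2 - 5) / (2 * z ^ 2 - 3) ^ 2) z := by
  refine (((hasDerivAt_pow 5 z).const_mul 4).div
    (((hasDerivAt_pow 2 z).const_mul 2).sub_const 3) hz).congr_deriv ?_
  norm_num
  ring

lemma continuousOn_sigma : ContinuousOn sigma (Ioi √(3 / 2)) := fun _ hz =>
  (hasDerivAt_sigma (sqrt_three_halves_lt_iff.1 hz).2.ne').continuousAt.continuousWithinAt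

lemma sigma_strictAntiOn : StrictAntiOn sigma (Ioc √(3 / 2) √(5 / 2)) := by
  refine strictAntiOn_of_deriv_neg (convex_Ioc _ _)
    (continuousOn_sigma.mono Ioc_subset_Ioi_self) fun z hz => ?_
  rw [interior_Ioc] at hz
  obtain ⟨hz0, hden⟩ := sqrt_three_halves_lt_iff.1 hz.1
  have hz5 : 2 * z ^ 2 - 5 < 0 := by linarith [(Real.lt_sqrt hz0.le).1 hz.2]
  rw [(hasDerivAt_sigma hden.ne').deriv]
  exact div_neg_of_neg_of_pos (mul_neg_of_pos_of_neg (by positivity) hz5) (by positivity)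

lemma tendsto_sigma_nhdsGT : Tendsto sigma (𝓝[>] √(3 / 2)) atTop := by
  have hden : Tendsto (fun z : ℝ => 2 * z ^ 2 - 3) (𝓝[>] √(3 / 2)) (𝓝[>] 0) := by
    refine tendsto_nhdsWithin_of_tendsto_nhds_of_eventually_within _ ?_ ?_
    · have hcont : Continuous (fun z : ℝ => 2 * z ^ 2 - 3) := by fun_prop
      refine (hcont.tendsto' _ 0 ?_).mono_left nhdsWithin_le_nhds
      rw [Real.sq_sqrt (by norm_num)]
      norm_num
    · filter_upwards [self_mem_nhdsWithin] with z hz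
      exact (sqrt_three_halves_lt_iff.1 hz).2
  have hnum : Tendsto (fun z : ℝ => 4 * z ^ 5) (𝓝[>] √(3 / 2)) (𝓝 (4 * √(3 / 2) ^ 5)) :=
    ((continuous_const.mul (continuous_pow 5)).tendsto _).mono_left nhdsWithin_le_nhds
  exact hnum.pos_mul_atTop (by positivity) (tendsto_inv_nhdsGT_zero.comp hden)

lemma exists_sigma_eq_of_sigma_lt {b ω : ℝ} (hb : √(3 / 2) < b) (hω : sigma b < ω) :
    ∃ z ∈ Ioo √(3 / 2) b, sigma z = ω := by
  obtain ⟨a, ⟨ha, hab⟩, hωa⟩ :=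
    (Filter.Eventually.and (Ioo_mem_nhdsGT hb)
      (tendsto_sigma_nhdsGT.eventually_ge_atTop ω)).exists
  obtain ⟨z, hz, hσz⟩ := intermediate_value_Icc' hab.le
    (continuousOn_sigma.mono fun _ hx => ha.trans_le hx.1) ⟨hω.le, hωa⟩
  refine ⟨z, ⟨ha.trans_le hz.1, hz.2.lt_of_ne ?_⟩, hσz⟩
  rintro rfl
  exact hω.ne hσz

lemma one_lt_sqrt_three : 1 < √3 := by
  rw [Real.lt_sqrt zero_le_one]
  norm_num

noncomputable def zCrit : ℝ := (1 + √3) / 2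

lemma two_mul_zCrit_sq_sub_three : 2 * zCrit ^ 2 - 3 = √3 - 1 := by
  rw [zCrit]
  linear_combination Real.sq_sqrt (show (0 : ℝ) ≤ 3 by norm_num) / 2

lemma zCrit_pos : 0 < zCrit := by
  rw [zCrit]
  positivity

lemma sqrt_three_halves_lt_zCrit : √(3 / 2) < zCrit :=
  sqrt_three_halves_lt_iff.2
    ⟨zCrit_pos, by rw [two_mul_zCrit_sq_sub_three]; linarith [one_lt_sqrt_three]⟩

lemma zCrit_lt_sqrt_five_halves : zCrit < √(5 / 2) := by
  rw [Real.lt_sqrt zCrit_pos.le]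
  have : √3 < 2 := by rw [Real.sqrt_lt' two_pos]; norm_num
  linarith [two_mul_zCrit_sq_sub_three]

lemma sigma_zCrit : sigma zCrit = (26 + 15 * √3) / 2 := by
  have hs : √3 ^ 2 = 3 := Real.sq_sqrt (by norm_num)
  rw [sigma, two_mul_zCrit_sq_sub_three, div_eq_iff (by linarith [one_lt_sqrt_three]), zCrit]
  linear_combination (√3 ^ 3 + 5 * √3 ^ 2 + 13 * √3 - 35) / 8 * hs

lemma lt_sigma_iff {z : ℝ} (hz : √(3 / 2) < z) :
    (5 + √27) * z ^ 3 < sigma z ↔ z < zCrit := by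
  obtain ⟨hz0, hden⟩ := sqrt_three_halves_lt_iff.1 hz
  have hs : √3 ^ 2 = 3 := Real.sq_sqrt (by norm_num)
  have h27 : √27 = 3 * √3 := by
    rw [show (27 : ℝ) = 3 ^ 2 * 3 by norm_num, Real.sqrt_mul (by positivity),
      Real.sqrt_sq (by norm_num)]
  have hfactor :
      (5 + 3 * √3) * (2 * z ^ 2 - 3) - 4 * z ^ 2 = (6 + 6 * √3) * (z ^ 2 - zCrit ^ 2) := by
    rw [zCrit]
    linear_combination (9 + 3 * √3) / 2 * hs
  calc (5 + √27) * z ^ 3 < sigma z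
      ↔ z ^ 3 * ((5 + 3 * √3) * (2 * z ^ 2 - 3)) < z ^ 3 * (4 * z ^ 2) := by
        rw [sigma, lt_div_iff₀ hden, h27]
        ring_nf
    _ ↔ (6 + 6 * √3) * (z ^ 2 - zCrit ^ 2) < 0 := by
        rw [mul_lt_mul_iff_right₀ (by positivity), ← sub_neg, hfactor]
    _ ↔ z ^ 2 < zCrit ^ 2 := by
        rw [← smul_eq_mul, smul_neg_iff_of_pos_left (by positivity), sub_neg]
    _ ↔ z < zCrit := pow_lt_pow_iff_left₀ hz0.le zCrit_pos.le two_ne_zero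

end Equilibrium

open Equilibrium in
/-- For every ω > ω_crit there exists a unique z₂ > √(3/2) with σ(z₂) = ω
and ω > (5+√27)z₂³, where σ(z) = 4z⁵/(2z²−3). -/
theorem sigma_unique_root (ω : ℝ) (hω : (26 + 15 * Real.sqrt 3) / 2 < ω) :
    ∃! z₂ : ℝ, Real.sqrt (3 / 2) < z₂ ∧
      4 * z₂ ^ 5 / (2 * z₂ ^ 2 - 3) = ω ∧
      (5 + Real.sqrt 27) * z₂ ^ 3 < ω := by
  obtain ⟨z, hz, hσz⟩ :=
    exists_sigma_eq_of_sigma_lt sqrt_three_halves_lt_zCrit (sigma_zCrit ▸ hω)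
  refine ⟨z, ⟨hz.1, hσz, hσz ▸ (lt_sigma_iff hz.1).2 hz.2⟩, ?_⟩
  rintro y ⟨hy, hσy, hyω⟩
  have hyc : y < zCrit := (lt_sigma_iff hy).1 (hyω.trans_eq hσy.symm)
  have hIoc : Ioo √(3 / 2) zCrit ⊆ Ioc √(3 / 2) √(5 / 2) :=
    Ioo_subset_Ioc_self.trans (Ioc_subset_Ioc_right zCrit_lt_sqrt_five_halves.le)
  exact sigma_strictAntiOn.injOn (hIoc ⟨hy, hyc⟩) (hIoc hz) (hσy.trans hσz.symm)
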